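/- arXiv:math/0507004 — 2 statements merged into one kernel-verified Lean document; each statement's English description precedes it below -/
import Mathlib

section
/- If A and B are convex subsets of hyperbolic space ℍⁿ with A ∩ B nonempty, then the convex hull of A ∪ B is contained in the Δ-neighborhood of A ∪ B, where Δ = log((3+√5)/2) is the thin-triangles constant of ℍ². -/
noncomputable section

/-- The upper half-space model of real hyperbolic `(n+1)`-space `ℍⁿ⁺¹`:
points of `ℝⁿ × ℝ` with positive last coordinate. -/
abbrev Hyp (n : ℕ) := {p : EuclideanSpace ℝ (Fin n) × ℝ // 0 < p.2}

/-- Inverse hyperbolic cosine. -/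
def arcoshR (x : ℝ) : ℝ := Real.log (x + Real.sqrt (x ^ 2 - 1))

/-- The hyperbolic distance in the upper half-space model. -/
def hdist {n : ℕ} (p q : Hyp n) : ℝ :=
  arcoshR (1 + (dist p.1.1 q.1.1 ^ 2 + (p.1.2 - q.1.2) ^ 2) / (2 * p.1.2 * q.1.2))

/-- `s` is a geodesic segment from `a` to `b` with respect to the distance function `d`:
the image of an arclength parametrization realizing `d`. -/
def IsSeg {X : Type*} (d : X → X → ℝ) (s : Set X) (a b : X) : Prop :=
  ∃ γ : ℝ → X, γ 0 = a ∧ γ (d a b) = b ∧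
    (∀ u ∈ Set.Icc (0:ℝ) (d a b), ∀ v ∈ Set.Icc (0:ℝ) (d a b), d (γ u) (γ v) = |u - v|) ∧
    s = γ '' Set.Icc (0:ℝ) (d a b)

/-- A set is convex (wrt the distance `d`) if any two of its points are joined by a
geodesic segment inside the set. -/
def DConvex {X : Type*} (d : X → X → ℝ) (A : Set X) : Prop :=
  ∀ a ∈ A, ∀ b ∈ A, ∃ s, IsSeg d s a b ∧ s ⊆ A

/-- The convex hull: the smallest convex set containing `A`. -/
def dConvexHull {X : Type*} (d : X → X → ℝ) (A : Set X) : Set X :=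
  ⋂₀ {C | A ⊆ C ∧ DConvex d C}

/-- The thin-triangles constant of the hyperbolic plane. -/
def thinDelta : ℝ := Real.log ((3 + Real.sqrt 5) / 2)

/-!
Fix `o ∈ A ∩ B` and suppose `x` is at distance more than `arsinh 1 = log (1 + √2) ≤ Δ` from
`A ∪ B`. In the hyperboloid model, `z ↦ cosh d(o,x) cosh d(x,z) - cosh d(o,z)` is the restriction
of a linear functional, and geodesic segments are positive combinations of their endpoints, so the
set `H` where this function is positive is convex; `x ∉ H`, as the function vanishes there. For
`a ∈ A`, along the geodesic `γ` from `o` to `a`, which stays in `A`, one has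
`cosh d(x, γ t) = R cosh (t - τ)` with `R ≥ 1`, and this exceeds `√2`; elementary estimates then
give `a ∈ H`. The same holds for `B`, so the hull of `A ∪ B` lies in `H` and cannot contain `x`.
-/

open Real Set

lemma cosh_add_le_two_mul_cosh_mul_cosh (a b : ℝ) : cosh (a + b) ≤ 2 * cosh a * cosh b := by
  have h := one_le_cosh (a - b)
  rw [cosh_sub] at h
  rw [cosh_add]
  linarith

lemma exists_eq_mul_cosh_sub {c b : ℝ} (hc : 0 < c) (hbc : b ^ 2 ≤ c ^ 2 - 1) :
    ∃ R τ : ℝ, 1 ≤ R ∧ R * cosh τ = c ∧ ∀ t, c * cosh t - b * sinh t = R * cosh (t - τ) := by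
  set R := √(c ^ 2 - b ^ 2)
  have hR : 1 ≤ R := by rw [show (1 : ℝ) = √1 by simp]; exact sqrt_le_sqrt (by linarith)
  have hRsq : R ^ 2 = c ^ 2 - b ^ 2 := sq_sqrt (by linarith)
  have hR0 : R ≠ 0 := by positivity
  have hcosh : cosh (arsinh (b / R)) = c / R := by
    rw [cosh_arsinh, show 1 + (b / R) ^ 2 = (c / R) ^ 2 by field_simp; linarith]
    exact sqrt_sq (by positivity)
  have hsinh : sinh (arsinh (b / R)) = b / R := sinh_arsinh _
  refine ⟨R, arsinh (b / R), hR, by rw [hcosh]; field_simp, fun t => ?_⟩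
  rw [cosh_sub, hcosh, hsinh]
  field_simp

lemma cosh_lt_mul_cosh_mul_cosh {R τ L : ℝ} (hR : 1 ≤ R) (hL : 0 ≤ L)
    (h : ∀ t ∈ Icc 0 L, √2 < R * cosh (t - τ)) : cosh L < R * cosh τ * (R * cosh (L - τ)) := by
  have h0 : 1 < R * cosh τ := by
    have := h 0 ⟨le_rfl, hL⟩
    rw [zero_sub, cosh_neg] at this
    linarith [one_lt_sqrt_two]
  have hL' : 1 < R * cosh (L - τ) := by linarith [h L ⟨hL, le_rfl⟩, one_lt_sqrt_two]
  -- `τ` is where `t ↦ R * cosh (t - τ)` is minimal: before, after or inside `[0, L]`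
  rcases le_or_gt τ 0 with hτ | hτ
  · have : cosh L ≤ cosh (L - τ) :=
      cosh_le_cosh.2 (by rw [abs_of_nonneg hL, abs_of_nonneg (by linarith)]; linarith)
    nlinarith [cosh_pos (L - τ)]
  rcases le_or_gt L τ with hτL | hτL
  · have : cosh L ≤ cosh τ :=
      cosh_le_cosh.2 (by rw [abs_of_nonneg hL, abs_of_nonneg (by linarith)]; linarith)
    nlinarith [cosh_pos τ]
  · have hRτ : √2 < R := by simpa using h τ ⟨hτ.le, hτL.le⟩
    have hR2 : 2 < R * R := by nlinarith [sq_sqrt (show (0:ℝ) ≤ 2 by norm_num), one_lt_sqrt_two]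
    have := cosh_add_le_two_mul_cosh_mul_cosh τ (L - τ)
    rw [add_sub_cancel] at this
    nlinarith [mul_pos (cosh_pos τ) (cosh_pos (L - τ)), cosh_pos L]

lemma cosh_mul_add_sinh_mul_pos {a b L t : ℝ} (ht : t ∈ Icc 0 L) (ha : 0 < a)
    (hL : 0 < cosh L * a + sinh L * b) : 0 < cosh t * a + sinh t * b := by
  rcases ht.1.eq_or_lt with rfl | ht0
  · simpa using ha
  have hsinhL : 0 < sinh L := sinh_pos_iff.2 (ht0.trans_le ht.2)
  have hsinht : 0 < sinh t := sinh_pos_iff.2 ht0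
  have hsinhLt : 0 ≤ sinh (L - t) := sinh_nonneg_iff.2 (sub_nonneg.2 ht.2)
  have key : sinh L * (cosh t * a + sinh t * b) =
      sinh (L - t) * a + sinh t * (cosh L * a + sinh L * b) := by
    rw [sinh_sub]; ring
  exact pos_of_mul_pos_right (key ▸ by positivity) hsinhL.le

/-- Minkowski space; `minkowski` below is the form of signature `(n + 1, 1)` with the last
coordinate timelike. -/
abbrev Minkowski (n : ℕ) := EuclideanSpace ℝ (Fin n) × ℝ × ℝ

section

variable {n : ℕ}

def minkowski : LinearMap.BilinForm ℝ (Minkowski n) :=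
  LinearMap.mk₂ ℝ (fun v w => inner ℝ v.1 w.1 + v.2.1 * w.2.1 - v.2.2 * w.2.2)
    (fun _ _ _ => by simp only [Prod.fst_add, Prod.snd_add, inner_add_left]; ring)
    (fun _ _ _ => by
      simp only [Prod.smul_fst, Prod.smul_snd, real_inner_smul_left, smul_eq_mul]; ring)
    (fun _ _ _ => by simp only [Prod.fst_add, Prod.snd_add, inner_add_right]; ring)
    (fun _ _ _ => by
      simp only [Prod.smul_fst, Prod.smul_snd, real_inner_smul_right, smul_eq_mul]; ring)

lemma minkowski_apply (v w : Minkowski n) :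
    minkowski v w = inner ℝ v.1 w.1 + v.2.1 * w.2.1 - v.2.2 * w.2.2 := rfl

lemma minkowski_comm (v w : Minkowski n) : minkowski v w = minkowski w v := by
  simp only [minkowski_apply, real_inner_comm]; ring

lemma sq_inner_add_mul_le {E : Type*} [NormedAddCommGroup E] [InnerProductSpace ℝ E]
    (u v : E) (a b : ℝ) : (inner ℝ u v + a * b) ^ 2 ≤ (‖u‖ ^ 2 + a ^ 2) * (‖v‖ ^ 2 + b ^ 2) := by
  have h := abs_real_inner_le_norm u v
  have h2 : |inner ℝ u v * (a * b)| ≤ ‖u‖ * ‖v‖ * (|a| * |b|) := by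
    rw [abs_mul, abs_mul]; gcongr
  nlinarith [abs_le.1 h2, sq_abs (inner ℝ u v), sq_nonneg (‖u‖ * |b| - |a| * ‖v‖), sq_abs a,
    sq_abs b, abs_nonneg (inner ℝ u v), mul_nonneg (norm_nonneg u) (norm_nonneg v)]

/-- Reverse Cauchy–Schwarz: a vector orthogonal to a timelike vector `W` is spacelike. -/
lemma spatial_mul_le_minkowski_self_mul {Y W : Minkowski n} (hYW : minkowski Y W = 0) :
    (‖Y.1‖ ^ 2 + Y.2.1 ^ 2) * -minkowski W W ≤ minkowski Y Y * W.2.2 ^ 2 := by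
  have hcs := sq_inner_add_mul_le Y.1 W.1 Y.2.1 W.2.1
  rw [minkowski_apply] at hYW
  simp only [minkowski_apply, real_inner_self_eq_norm_sq]
  have : inner ℝ Y.1 W.1 + Y.2.1 * W.2.1 = Y.2.2 * W.2.2 := by linarith
  rw [this] at hcs
  nlinarith

lemma minkowski_self_nonneg_of_orthogonal {Y W : Minkowski n} (hW : minkowski W W < 0)
    (hYW : minkowski Y W = 0) : 0 ≤ minkowski Y Y := by
  have h := spatial_mul_le_minkowski_self_mul hYW
  have hW2 : 0 < W.2.2 ^ 2 := by
    rw [minkowski_apply, real_inner_self_eq_norm_sq] at hW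
    nlinarith [sq_nonneg ‖W.1‖, sq_nonneg W.2.1]
  have : 0 ≤ (‖Y.1‖ ^ 2 + Y.2.1 ^ 2) * -minkowski W W := by
    apply mul_nonneg (by positivity) (by linarith)
  exact nonneg_of_mul_nonneg_left (by linarith) hW2

lemma eq_zero_of_orthogonal {Y W : Minkowski n} (hW : minkowski W W < 0)
    (hYW : minkowski Y W = 0) (hY : minkowski Y Y = 0) : Y = 0 := by
  have h := spatial_mul_le_minkowski_self_mul hYW
  rw [hY, zero_mul] at h
  have h1 : ‖Y.1‖ ^ 2 + Y.2.1 ^ 2 = 0 :=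
    le_antisymm (nonpos_of_mul_nonpos_left h (by linarith)) (by positivity)
  have hY1 : Y.1 = 0 := by
    rw [← norm_eq_zero]; nlinarith [sq_nonneg Y.2.1, sq_nonneg ‖Y.1‖, norm_nonneg Y.1]
  have hY21 : Y.2.1 = 0 := by nlinarith [sq_nonneg Y.2.1, sq_nonneg ‖Y.1‖]
  have hW22 : W.2.2 ≠ 0 := by
    rintro h0
    rw [minkowski_apply, real_inner_self_eq_norm_sq, h0] at hW
    nlinarith [sq_nonneg ‖W.1‖, sq_nonneg W.2.1]
  rw [minkowski_apply, hY1, hY21, inner_zero_left, zero_mul, zero_add, zero_sub, neg_eq_zero] at hYW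
  exact Prod.ext hY1 (Prod.ext hY21 ((mul_eq_zero.1 hYW).resolve_right hW22))

lemma sq_minkowski_le {X P B : Minkowski n} (hX : minkowski X X = -1) (hP : minkowski P P = -1)
    (hB : minkowski B B = 1) (hPB : minkowski P B = 0) :
    minkowski X B ^ 2 ≤ minkowski X P ^ 2 - 1 := by
  set Y := X + minkowski X P • P - minkowski X B • B
  have hYP : minkowski Y P = 0 := by
    simp only [Y, map_add, map_sub, map_smul, LinearMap.add_apply, LinearMap.sub_apply,
      LinearMap.smul_apply, smul_eq_mul, hP, minkowski_comm B P, hPB]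
    ring
  have := minkowski_self_nonneg_of_orthogonal (by rw [hP]; norm_num) hYP
  simp only [Y, map_add, map_sub, map_smul, LinearMap.add_apply, LinearMap.sub_apply,
    LinearMap.smul_apply, smul_eq_mul, hP, hB, hX, hPB, minkowski_comm B P, minkowski_comm P X,
    minkowski_comm B X] at this
  nlinarith

/-- The standard isometry of the upper half-space onto the sheet `W.2.2 > 0` of the hyperboloid
`minkowski W W = -1`. -/
def toHyperboloid (p : Hyp n) : Minkowski n :=
  (p.1.2⁻¹ • p.1.1, (‖p.1.1‖ ^ 2 + p.1.2 ^ 2 - 1) / (2 * p.1.2),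
    (‖p.1.1‖ ^ 2 + p.1.2 ^ 2 + 1) / (2 * p.1.2))

lemma arcoshR_eq_arcosh : arcoshR = arcosh := rfl

lemma cosh_hdist (p q : Hyp n) :
    cosh (hdist p q) = 1 + (dist p.1.1 q.1.1 ^ 2 + (p.1.2 - q.1.2) ^ 2) / (2 * p.1.2 * q.1.2) := by
  have := p.2; have := q.2
  rw [hdist, arcoshR_eq_arcosh, cosh_arcosh (le_add_of_nonneg_right (by positivity))]

lemma hdist_nonneg (p q : Hyp n) : 0 ≤ hdist p q := by
  have := p.2; have := q.2
  exact arcosh_nonneg (le_add_of_nonneg_right (by positivity))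

lemma hdist_eq_of_cosh_eq {p q : Hyp n} {s : ℝ} (hs : 0 ≤ s) (h : cosh (hdist p q) = cosh s) :
    hdist p q = s := by
  rw [← arcosh_cosh (hdist_nonneg p q), h, arcosh_cosh hs]

lemma minkowski_toHyperboloid (p q : Hyp n) :
    minkowski (toHyperboloid p) (toHyperboloid q) = -cosh (hdist p q) := by
  have := p.2; have := q.2
  rw [cosh_hdist]
  simp only [minkowski_apply, toHyperboloid, real_inner_smul_left, real_inner_smul_right,
    dist_eq_norm, norm_sub_sq_real]
  field_simp
  ring

lemma hdist_self (p : Hyp n) : hdist p p = 0 :=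
  hdist_eq_of_cosh_eq le_rfl (by simp [cosh_hdist])

lemma minkowski_toHyperboloid_self (p : Hyp n) :
    minkowski (toHyperboloid p) (toHyperboloid p) = -1 := by
  rw [minkowski_toHyperboloid, hdist_self, cosh_zero]

lemma hdist_comm (p q : Hyp n) : hdist p q = hdist q p := by
  apply hdist_eq_of_cosh_eq (hdist_nonneg q p)
  rw [← neg_inj, ← minkowski_toHyperboloid, ← minkowski_toHyperboloid, minkowski_comm]

/-- On the image of `toHyperboloid`, the reciprocal of the height. -/
def lightCoord : Minkowski n →ₗ[ℝ] ℝ :=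
  (LinearMap.snd ℝ ℝ ℝ - LinearMap.fst ℝ ℝ ℝ) ∘ₗ LinearMap.snd ℝ _ _

lemma lightCoord_apply (W : Minkowski n) : lightCoord W = W.2.2 - W.2.1 := rfl

lemma lightCoord_toHyperboloid (p : Hyp n) : lightCoord (toHyperboloid p) = p.1.2⁻¹ := by
  have := p.2
  simp only [lightCoord_apply, toHyperboloid]
  field_simp
  ring

lemma toHyperboloid_injective : Function.Injective (toHyperboloid (n := n)) := by
  intro p q h
  have h2 : p.1.2 = q.1.2 := by
    simpa [lightCoord_toHyperboloid] using congrArg lightCoord h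
  have h1 : p.1.2⁻¹ • p.1.1 = q.1.2⁻¹ • q.1.1 := congrArg Prod.fst h
  rw [h2] at h1
  exact Subtype.ext (Prod.ext (smul_right_injective _ (inv_ne_zero q.2.ne') h1) h2)

def ofHyperboloid (W : Minkowski n) (hW : 0 < lightCoord W) : Hyp n :=
  ⟨((lightCoord W)⁻¹ • W.1, (lightCoord W)⁻¹), inv_pos.2 hW⟩

lemma toHyperboloid_ofHyperboloid {W : Minkowski n} (hWW : minkowski W W = -1)
    (hW : 0 < lightCoord W) : toHyperboloid (ofHyperboloid W hW) = W := by
  rw [minkowski_apply, real_inner_self_eq_norm_sq] at hWW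
  rw [lightCoord_apply] at hW
  simp only [toHyperboloid, ofHyperboloid, lightCoord_apply, norm_smul, smul_smul, norm_inv,
    Real.norm_eq_abs, abs_of_pos hW, inv_inv, mul_inv_cancel₀ hW.ne', one_smul]
  refine Prod.ext rfl (Prod.ext ?_ ?_) <;> dsimp only <;> field_simp <;> linear_combination hWW

lemma hdist_pos {p q : Hyp n} (hpq : p ≠ q) : 0 < hdist p q := by
  refine (hdist_nonneg p q).lt_of_ne' fun h => hpq (toHyperboloid_injective ?_)
  have hpq' := minkowski_toHyperboloid p q
  rw [h, cosh_zero] at hpq'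
  have hp := minkowski_toHyperboloid_self p
  have hq := minkowski_toHyperboloid_self q
  refine sub_eq_zero.1 (eq_zero_of_orthogonal (W := toHyperboloid p) (by rw [hp]; norm_num) ?_ ?_)
  · simp only [map_sub, LinearMap.sub_apply, minkowski_comm (toHyperboloid q), hp, hpq', sub_self]
  · simp only [map_sub, LinearMap.sub_apply, minkowski_comm (toHyperboloid q), hp, hq, hpq']
    ring

lemma minkowski_cosh_smul_add_sinh_smul {P B : Minkowski n} (hP : minkowski P P = -1)
    (hB : minkowski B B = 1) (hPB : minkowski P B = 0) (u v : ℝ) :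
    minkowski (cosh u • P + sinh u • B) (cosh v • P + sinh v • B) = -cosh (u - v) := by
  simp only [map_add, map_smul, LinearMap.add_apply, LinearMap.smul_apply, smul_eq_mul, hP, hB,
    hPB, minkowski_comm B P, cosh_sub]
  ring

lemma exists_unit_tangent {P Q : Minkowski n} {L : ℝ} (hL : L ≠ 0) (hP : minkowski P P = -1)
    (hQ : minkowski Q Q = -1) (hPQ : minkowski P Q = -cosh L) :
    ∃ B, minkowski B B = 1 ∧ minkowski P B = 0 ∧ cosh L • P + sinh L • B = Q := by
  have hsinh : sinh L ≠ 0 := sinh_ne_zero.2 hL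
  refine ⟨(sinh L)⁻¹ • (Q - cosh L • P), ?_, ?_, ?_⟩
  · simp only [map_sub, map_smul, LinearMap.sub_apply, LinearMap.smul_apply, smul_eq_mul, hP, hQ,
      hPQ, minkowski_comm Q P]
    field_simp
    linear_combination cosh_sq L
  · simp only [map_sub, map_smul, smul_eq_mul, hP, hPQ]
    ring
  · rw [smul_smul, mul_inv_cancel₀ hsinh, one_smul, add_sub_cancel]

lemma minkowski_toHyperboloid_of_isometry {γ : ℝ → Hyp n} {L : ℝ}
    (hγ : ∀ u ∈ Icc 0 L, ∀ v ∈ Icc 0 L, hdist (γ u) (γ v) = |u - v|) :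
    ∀ u ∈ Icc 0 L, ∀ v ∈ Icc 0 L,
      minkowski (toHyperboloid (γ u)) (toHyperboloid (γ v)) = -cosh (u - v) := fun u hu v hv => by
  rw [minkowski_toHyperboloid, hγ u hu v hv, cosh_abs]

lemma exists_isSeg_forall_pos (p q : Hyp n) :
    ∃ s, IsSeg hdist s p q ∧ ∀ z ∈ s, ∀ Λ : Minkowski n →ₗ[ℝ] ℝ,
      0 < Λ (toHyperboloid p) → 0 < Λ (toHyperboloid q) → 0 < Λ (toHyperboloid z) := by
  rcases eq_or_ne p q with rfl | hpq
  · refine ⟨(fun _ => p) '' Icc 0 (hdist p p), ⟨fun _ => p, rfl, rfl, ?_, rfl⟩, ?_⟩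
    · simp only [hdist_self, Icc_self, mem_singleton_iff]
      rintro u rfl v rfl
      simp
    · rintro _ ⟨_, _, rfl⟩ _ hp _
      exact hp
  set L := hdist p q
  have hL : 0 < L := hdist_pos hpq
  have hP := minkowski_toHyperboloid_self p
  obtain ⟨B, hB, hPB, hQ⟩ := exists_unit_tangent hL.ne' hP (minkowski_toHyperboloid_self q)
    (minkowski_toHyperboloid p q)
  set V : ℝ → Minkowski n := fun t => cosh t • toHyperboloid p + sinh t • B
  have hVpos : ∀ t ∈ Icc 0 L, ∀ Λ : Minkowski n →ₗ[ℝ] ℝ,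
      0 < Λ (toHyperboloid p) → 0 < Λ (toHyperboloid q) → 0 < Λ (V t) := by
    intro t ht Λ hp hq
    rw [← hQ] at hq
    simp only [V, map_add, map_smul, smul_eq_mul] at hq ⊢
    exact cosh_mul_add_sinh_mul_pos ht hp hq
  -- the `else` branch is junk: it is never taken on `[0, L]`
  let γ : ℝ → Hyp n := fun t => if h : 0 < lightCoord (V t) then ofHyperboloid (V t) h else p
  have hγ : ∀ t ∈ Icc 0 L, toHyperboloid (γ t) = V t := fun t ht => by
    have h := hVpos t ht lightCoord (by simpa [lightCoord_toHyperboloid] using p.2)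
      (by simpa [lightCoord_toHyperboloid] using q.2)
    simp only [γ, dif_pos h]
    refine toHyperboloid_ofHyperboloid ?_ h
    rw [minkowski_cosh_smul_add_sinh_smul hP hB hPB, sub_self, cosh_zero]
  have h0 : (0 : ℝ) ∈ Icc 0 L := ⟨le_rfl, hL.le⟩
  have hL' : L ∈ Icc 0 L := ⟨hL.le, le_rfl⟩
  refine ⟨γ '' Icc 0 L, ⟨γ, ?_, ?_, fun u hu v hv => ?_, rfl⟩, ?_⟩
  · apply toHyperboloid_injective
    simp [hγ 0 h0, V]
  · apply toHyperboloid_injective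
    rw [hγ L hL', ← hQ]
  · refine hdist_eq_of_cosh_eq (abs_nonneg _) ?_
    rw [← neg_inj, ← minkowski_toHyperboloid, hγ u hu, hγ v hv,
      minkowski_cosh_smul_add_sinh_smul hP hB hPB, cosh_abs]
  · rintro _ ⟨t, ht, rfl⟩ Λ hp hq
    rw [hγ t ht]
    exact hVpos t ht Λ hp hq

lemma dConvex_setOf_pos (Λ : Minkowski n →ₗ[ℝ] ℝ) :
    DConvex hdist {z : Hyp n | 0 < Λ (toHyperboloid z)} := fun p hp q hq =>
  let ⟨s, hs, hpos⟩ := exists_isSeg_forall_pos p q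
  ⟨s, hs, fun z hz => hpos z hz Λ hp hq⟩

lemma eq_cosh_smul_add_sinh_smul {X P B : Minkowski n} {t : ℝ} (hX : minkowski X X = -1)
    (hP : minkowski P P = -1) (hB : minkowski B B = 1) (hPB : minkowski P B = 0)
    (hXP : minkowski X P = -cosh t) (hXB : minkowski X B = sinh t) :
    X = cosh t • P + sinh t • B := by
  set V := cosh t • P + sinh t • B
  have hXV : minkowski X V = -1 := by
    simp only [V, map_add, map_smul, smul_eq_mul, hXP, hXB]
    linear_combination -cosh_sq t
  have hVV : minkowski V V = -1 := by
    rw [minkowski_cosh_smul_add_sinh_smul hP hB hPB, sub_self, cosh_zero]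
  have hVP : minkowski V P = -cosh t := by
    simp only [V, map_add, map_smul, LinearMap.add_apply, LinearMap.smul_apply, smul_eq_mul, hP,
      minkowski_comm B P, hPB]
    ring
  refine sub_eq_zero.1 (eq_zero_of_orthogonal (W := P) (by rw [hP]; norm_num) ?_ ?_)
  · rw [map_sub, LinearMap.sub_apply, hXP, hVP, sub_self]
  · simp only [map_sub, LinearMap.sub_apply, hX, hXV, hVV, minkowski_comm V X]
    ring

lemma toHyperboloid_eq_of_isometry {γ : ℝ → Hyp n} {L : ℝ} (hL : 0 < L)
    (hγ : ∀ u ∈ Icc 0 L, ∀ v ∈ Icc 0 L, hdist (γ u) (γ v) = |u - v|) :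
    ∃ B, minkowski B B = 1 ∧ minkowski (toHyperboloid (γ 0)) B = 0 ∧
      ∀ t ∈ Icc 0 L, toHyperboloid (γ t) = cosh t • toHyperboloid (γ 0) + sinh t • B := by
  have h0 : (0 : ℝ) ∈ Icc 0 L := ⟨le_rfl, hL.le⟩
  have hL' : L ∈ Icc 0 L := ⟨hL.le, le_rfl⟩
  have hm := minkowski_toHyperboloid_of_isometry hγ
  have hP := minkowski_toHyperboloid_self (γ 0)
  obtain ⟨B, hB, hPB, hQ⟩ := exists_unit_tangent hL.ne' hP (minkowski_toHyperboloid_self _)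
    (by rw [hm 0 h0 L hL', zero_sub, cosh_neg])
  refine ⟨B, hB, hPB, fun t ht => ?_⟩
  have hXP : minkowski (toHyperboloid (γ t)) (toHyperboloid (γ 0)) = -cosh t := by
    rw [hm t ht 0 h0, sub_zero]
  have hXQ := hm t ht L hL'
  rw [← hQ] at hXQ
  simp only [map_add, map_smul, smul_eq_mul, hXP, cosh_sub] at hXQ
  refine eq_cosh_smul_add_sinh_smul (minkowski_toHyperboloid_self _) hP hB hPB hXP ?_
  exact mul_left_cancel₀ (sinh_ne_zero.2 hL.ne') (by linarith)

lemma cosh_hdist_lt_of_dConvex {S : Set (Hyp n)} {o x a : Hyp n} (hS : DConvex hdist S)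
    (ho : o ∈ S) (hfar : ∀ z ∈ S, √2 < cosh (hdist x z)) (ha : a ∈ S) :
    cosh (hdist o a) < cosh (hdist o x) * cosh (hdist x a) := by
  have hox : √2 < cosh (hdist o x) := hdist_comm x o ▸ hfar o ho
  rcases eq_or_ne o a with rfl | hoa
  · rw [hdist_self, cosh_zero, hdist_comm x o]
    nlinarith [one_lt_sqrt_two]
  obtain ⟨s, ⟨γ, hγ0, hγL, hγ, rfl⟩, hsS⟩ := hS o ho a ha
  set L := hdist o a
  have hL : 0 < L := hdist_pos hoa
  obtain ⟨B, hB, hPB, hγB⟩ := toHyperboloid_eq_of_isometry hL hγ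
  rw [hγ0] at hPB hγB
  set c := cosh (hdist o x)
  set b := minkowski (toHyperboloid x) B
  have hγx : ∀ t ∈ Icc 0 L, cosh (hdist x (γ t)) = c * cosh t - b * sinh t := fun t ht => by
    rw [← neg_inj, ← minkowski_toHyperboloid, hγB t ht]
    simp only [map_add, map_smul, smul_eq_mul, minkowski_toHyperboloid, hdist_comm x o, c, b]
    ring
  have hbc : b ^ 2 ≤ c ^ 2 - 1 := by
    have :=
      sq_minkowski_le (minkowski_toHyperboloid_self x) (minkowski_toHyperboloid_self o) hB hPB
    rwa [minkowski_toHyperboloid, hdist_comm, neg_sq] at this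
  -- `R` is the `cosh` of the distance from `x` to the geodesic through `o` and `a`
  obtain ⟨R, τ, hR, hRc, hRτ⟩ := exists_eq_mul_cosh_sub (by linarith [one_lt_sqrt_two]) hbc
  have hfarγ : ∀ t ∈ Icc 0 L, √2 < R * cosh (t - τ) := fun t ht => by
    rw [← hRτ, ← hγx t ht]
    exact hfar _ (hsS (mem_image_of_mem γ ht))
  have := cosh_lt_mul_cosh_mul_cosh hR hL.le hfarγ
  rwa [hRc, ← hRτ, ← hγx L ⟨hL.le, le_rfl⟩, hγL] at this

lemma dConvex_setOf_cosh_hdist_lt (o x : Hyp n) :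
    DConvex hdist {z | cosh (hdist o z) < cosh (hdist o x) * cosh (hdist x z)} := by
  convert dConvex_setOf_pos
    (minkowski (toHyperboloid o) - cosh (hdist o x) • minkowski (toHyperboloid x)) using 1
  ext z
  simp only [mem_ofPred_eq, LinearMap.sub_apply, LinearMap.smul_apply, minkowski_toHyperboloid,
    smul_eq_mul]
  constructor <;> intro h <;> linarith

theorem dConvexHull_sUnion_subset {𝒮 : Set (Set (Hyp n))} {o : Hyp n} {D : ℝ}
    (hD : arsinh 1 ≤ D) (h𝒮 : ∀ S ∈ 𝒮, DConvex hdist S) (ho : ∀ S ∈ 𝒮, o ∈ S) :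
    dConvexHull hdist (⋃₀ 𝒮) ⊆ {x | ∃ y ∈ ⋃₀ 𝒮, hdist x y ≤ D} := by
  intro x hx
  show ∃ y ∈ ⋃₀ 𝒮, hdist x y ≤ D
  by_contra! hfar
  have hfar' : ∀ y ∈ ⋃₀ 𝒮, √2 < cosh (hdist x y) := fun y hy => by
    have h1 : 0 ≤ arsinh 1 := arsinh_nonneg_iff.2 zero_le_one
    have := (cosh_lt_cosh (x := arsinh 1) (y := hdist x y)).2 (by
      rw [abs_of_nonneg h1, abs_of_nonneg (hdist_nonneg x y)]
      exact hD.trans_lt (hfar y hy))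
    rwa [cosh_arsinh, one_pow, one_add_one_eq_two] at this
  have hsub : ⋃₀ 𝒮 ⊆ {z | cosh (hdist o z) < cosh (hdist o x) * cosh (hdist x z)} :=
    sUnion_subset fun S hS _ ha =>
      cosh_hdist_lt_of_dConvex (h𝒮 S hS) (ho S hS) (fun z hz => hfar' z ⟨S, hS, hz⟩) ha
  have hx' := hx _ ⟨hsub, dConvex_setOf_cosh_hdist_lt o x⟩
  simp [hdist_self] at hx'

end

lemma arsinh_one_le_thinDelta : arsinh 1 ≤ thinDelta := by
  have h5 : √5 ^ 2 = 5 := sq_sqrt (by norm_num)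
  have hinv : ((3 + √5) / 2)⁻¹ = (3 - √5) / 2 := inv_eq_of_mul_eq_one_right (by nlinarith)
  rw [← arsinh_sinh thinDelta, arsinh_le_arsinh, thinDelta, sinh_log (by positivity), hinv]
  nlinarith [sqrt_nonneg 5]

/-- **Convex unions.** If `A` and `B` are convex subsets of hyperbolic space with
nonempty intersection, then the convex hull of `A ∪ B` is contained in the
`Δ`-neighborhood of `A ∪ B`, where `Δ = log((3+√5)/2)`. -/
theorem convex_union_hull_close {n : ℕ} (A B : Set (Hyp n))
    (hA : DConvex hdist A) (hB : DConvex hdist B) (hAB : (A ∩ B).Nonempty) :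
    dConvexHull hdist (A ∪ B) ⊆ {x | ∃ y ∈ A ∪ B, hdist x y ≤ thinDelta} := by
  obtain ⟨o, hoA, hoB⟩ := hAB
  rw [← sUnion_pair]
  exact dConvexHull_sUnion_subset (o := o) arsinh_one_le_thinDelta (by simp [hA, hB])
    (by simp [hoA, hoB])
end
end

section
/- Identify ℍⁿ with upper half-space {x ∈ ℝⁿ : xₙ > 0} with metric ds/xₙ. Let S be a convex subset of the horosphere {xₙ = 1} (convex with respect to the induced Euclidean metric on the horosphere). Then the set Ω = {(x₁,…,xₙ) : (x₁,…,x_{n−1},1) ∈ S and xₙ ≥ 1} is a convex subset of ℍⁿ. -/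
noncomputable section

/-!
Two points of `Ω` are joined by a hyperbolic geodesic: a vertical segment if they lie over the
same point, and otherwise an arc of the semicircle orthogonal to the boundary in the vertical
plane through them. With the unit-speed parametrization `s ↦ (x₀ + r tanh s · w, r / cosh s)`
of that semicircle, the horizontal coordinate moves monotonically along the Euclidean segment
between the two base points, hence stays in `S`, while the height `r / cosh s` is at least its
smaller endpoint value because `cosh` is bounded by its endpoint values on an interval.
-/

open Real Set

namespace Real

lemma tanh_le_tanh_iff {x y : ℝ} : tanh x ≤ tanh y ↔ x ≤ y := by
  rw [← artanh_le_artanh_iff ⟨neg_one_lt_tanh x, tanh_lt_one x⟩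
    ⟨neg_one_lt_tanh y, tanh_lt_one y⟩, artanh_tanh, artanh_tanh]

lemma cosh_le_max_of_mem_Icc {s t u : ℝ} (hu : u ∈ Icc s t) :
    cosh u ≤ max (cosh s) (cosh t) := by
  rcases le_max_iff.1 (abs_le_max_abs_abs hu.1 hu.2) with h | h
  · exact le_max_of_le_left (cosh_le_cosh.2 h)
  · exact le_max_of_le_right (cosh_le_cosh.2 h)

lemma exists_mul_tanh_eq_and_div_cosh_eq {y h r : ℝ} (hh : 0 < h) (hr : 0 < r)
    (hyr : y ^ 2 + h ^ 2 = r ^ 2) : ∃ s, r * tanh s = y ∧ r / cosh s = h := by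
  have hcosh : cosh (arsinh (y / h)) = r / h := by
    rw [cosh_arsinh, ← sqrt_sq (div_pos hr hh).le]
    congr 1
    field_simp
    linarith
  refine ⟨arsinh (y / h), ?_, ?_⟩
  · rw [tanh_eq_sinh_div_cosh, sinh_arsinh, hcosh]
    field_simp
  · rw [hcosh]
    field_simp

/-- The semicircle through `(p, A)` and `(q, B)` centred on the real axis, in its hyperbolic
unit-speed parametrization `s ↦ (c + r tanh s, r / cosh s)`. -/
lemma exists_semicircle_through {p q A B : ℝ} (hpq : p < q) (hA : 0 < A) (hB : 0 < B) :
    ∃ c r s t : ℝ, 0 < r ∧ s ≤ t ∧ c + r * tanh s = p ∧ r / cosh s = A ∧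
      c + r * tanh t = q ∧ r / cosh t = B := by
  -- the point of the axis equidistant from `(p, A)` and `(q, B)`
  set c := (p + q) / 2 + (B ^ 2 - A ^ 2) / (2 * (q - p))
  set r := √((p - c) ^ 2 + A ^ 2)
  have hr : 0 < r := sqrt_pos.2 (by positivity)
  have hrA : (p - c) ^ 2 + A ^ 2 = r ^ 2 := (sq_sqrt (by positivity)).symm
  have hrB : (q - c) ^ 2 + B ^ 2 = r ^ 2 := by
    rw [← hrA]
    simp only [c]
    field_simp [(sub_pos.2 hpq).ne']
    ring
  obtain ⟨s, hs, hsA⟩ := exists_mul_tanh_eq_and_div_cosh_eq hA hr hrA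
  obtain ⟨t, ht, htB⟩ := exists_mul_tanh_eq_and_div_cosh_eq hB hr hrB
  refine ⟨c, r, s, t, hr, ?_, by linarith, hsA, by linarith, htB⟩
  rw [← tanh_le_tanh_iff, ← mul_le_mul_iff_of_pos_left hr]
  linarith

end Real

section Segments

variable {X : Type*} {d : X → X → ℝ}

lemma isSeg_image_Icc {γ : ℝ → X} (hγ : ∀ u v, d (γ u) (γ v) = |u - v|) {s t : ℝ}
    (hst : s ≤ t) : IsSeg d (γ '' Icc s t) (γ s) (γ t) := by
  have hd : d (γ s) (γ t) = t - s := by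
    rw [hγ, abs_sub_comm, abs_of_nonneg (sub_nonneg.2 hst)]
  refine ⟨fun u => γ (s + u), by simp, by simp [hd], fun u _ v _ => by simp [hγ], ?_⟩
  rw [hd, ← image_image γ (s + ·), image_const_add_Icc, add_zero, add_sub_cancel]

lemma IsSeg.symm (hd : ∀ x y, d x y = d y x) {s : Set X} {a b : X} (h : IsSeg d s a b) :
    IsSeg d s b a := by
  obtain ⟨γ, h0, hL, hγ, rfl⟩ := h
  set L := d a b
  have hL' : d b a = L := hd b a
  have hrev : ∀ u ∈ Icc 0 L, L - u ∈ Icc 0 L := fun u hu =>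
    ⟨by linarith [hu.2], by linarith [hu.1]⟩
  refine ⟨fun u => γ (L - u), by simpa using hL, by simpa [hL'] using h0, ?_, ?_⟩
  · rw [hL']
    intro u hu v hv
    rw [hγ _ (hrev u hu) _ (hrev v hv), sub_sub_sub_cancel_left, abs_sub_comm]
  · rw [hL', ← image_image γ (L - ·), image_const_sub_Icc, sub_zero, sub_self]

end Segments

section UpperHalfSpace

variable {n : ℕ}

lemma arcoshR_cosh (t : ℝ) : arcoshR (cosh t) = |t| := by
  have hsq : cosh t ^ 2 - 1 = sinh t ^ 2 := by
    rw [cosh_sq]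
    ring
  rw [arcoshR, hsq, sqrt_sq_eq_abs, abs_sinh, ← cosh_abs, cosh_add_sinh, log_exp]

def Hyp.vertical (x : EuclideanSpace ℝ (Fin n)) (s : ℝ) : Hyp n := ⟨(x, exp s), exp_pos s⟩

def Hyp.semicircle (x w : EuclideanSpace ℝ (Fin n)) {r : ℝ} (hr : 0 < r) (s : ℝ) : Hyp n :=
  ⟨(x + (r * tanh s) • w, r / cosh s), div_pos hr (cosh_pos s)⟩

lemma hdist_vertical (x : EuclideanSpace ℝ (Fin n)) (s t : ℝ) :
    hdist (Hyp.vertical x s) (Hyp.vertical x t) = |s - t| := by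
  rw [← arcoshR_cosh]
  simp only [hdist, Hyp.vertical, dist_self]
  congr 1
  rw [cosh_eq, neg_sub, exp_sub, exp_sub]
  field_simp
  ring

lemma hdist_semicircle {x w : EuclideanSpace ℝ (Fin n)} (hw : ‖w‖ = 1) {r : ℝ} (hr : 0 < r)
    (s t : ℝ) : hdist (Hyp.semicircle x w hr s) (Hyp.semicircle x w hr t) = |s - t| := by
  have hdist_base : dist (x + (r * tanh s) • w) (x + (r * tanh t) • w) ^ 2
      = r ^ 2 * (tanh s - tanh t) ^ 2 := by
    rw [dist_add_left, dist_eq_norm, ← sub_smul, norm_smul, hw, mul_one, Real.norm_eq_abs,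
      sq_abs, ← mul_sub, mul_pow]
  rw [← arcoshR_cosh]
  simp only [hdist, Hyp.semicircle]
  congr 1
  rw [hdist_base, cosh_sub, tanh_eq_sinh_div_cosh, tanh_eq_sinh_div_cosh]
  have hs := cosh_pos s
  have ht := cosh_pos t
  field_simp
  linear_combination (-cosh t ^ 2) * cosh_sq s - cosh s ^ 2 * cosh_sq t

end UpperHalfSpace

section ProductCusp

variable {n : ℕ}

def productCusp (S : Set (EuclideanSpace ℝ (Fin n))) : Set (Hyp n) :=
  {p | p.1.1 ∈ S ∧ 1 ≤ p.1.2}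

variable {S : Set (EuclideanSpace ℝ (Fin n))}

lemma exists_vertical_isSeg_subset_productCusp {a b : Hyp n} (ha : a ∈ productCusp S)
    (hb : b ∈ productCusp S) (hx : a.1.1 = b.1.1) :
    ∃ s, IsSeg hdist s a b ∧ s ⊆ productCusp S := by
  wlog hab : a.1.2 ≤ b.1.2 generalizing a b
  · obtain ⟨s, hs, hsub⟩ := this hb ha hx.symm (le_of_not_ge hab)
    exact ⟨s, hs.symm hdist_comm, hsub⟩
  have hseg := isSeg_image_Icc (hdist_vertical a.1.1) (log_le_log a.2 hab)
  rw [show Hyp.vertical a.1.1 (log a.1.2) = a from Subtype.ext (Prod.ext rfl (exp_log a.2)),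
    show Hyp.vertical a.1.1 (log b.1.2) = b from Subtype.ext (Prod.ext hx (exp_log b.2))] at hseg
  refine ⟨_, hseg, ?_⟩
  rintro _ ⟨u, hu, rfl⟩
  exact ⟨ha.1, ha.2.trans ((log_le_iff_le_exp a.2).1 hu.1)⟩

lemma exists_semicircle_isSeg_subset_productCusp (hS : Convex ℝ S) {a b : Hyp n}
    (ha : a ∈ productCusp S) (hb : b ∈ productCusp S) (hx : a.1.1 ≠ b.1.1) :
    ∃ s, IsSeg hdist s a b ∧ s ⊆ productCusp S := by
  set D := dist a.1.1 b.1.1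
  have hD : 0 < D := dist_pos.2 hx
  set w := D⁻¹ • (b.1.1 - a.1.1)
  have hw : ‖w‖ = 1 := by
    rw [norm_smul, norm_inv, norm_sub_rev, ← dist_eq_norm, Real.norm_of_nonneg hD.le,
      inv_mul_cancel₀ hD.ne']
  obtain ⟨c, r, s, t, hr, hst, hsa, hsA, htb, htB⟩ := exists_semicircle_through hD a.2 b.2
  set γ := Hyp.semicircle (a.1.1 + c • w) w hr
  have hγ_base : ∀ u, (γ u).1.1 = a.1.1 + ((c + r * tanh u) / D) • (b.1.1 - a.1.1) := by
    intro u
    simp only [γ, Hyp.semicircle, w]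
    module
  have hseg : IsSeg hdist (γ '' Icc s t) (γ s) (γ t) :=
    isSeg_image_Icc (hdist_semicircle hw hr) hst
  rw [show γ s = a from Subtype.ext (Prod.ext (by simp [hγ_base, hsa]) hsA),
    show γ t = b from Subtype.ext (Prod.ext (by simp [hγ_base, htb, hD.ne']) htB)] at hseg
  refine ⟨_, hseg, ?_⟩
  rintro _ ⟨u, hu, rfl⟩
  have htanh : r * tanh s ≤ r * tanh u ∧ r * tanh u ≤ r * tanh t :=
    ⟨mul_le_mul_of_nonneg_left (tanh_le_tanh_iff.2 hu.1) hr.le,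
      mul_le_mul_of_nonneg_left (tanh_le_tanh_iff.2 hu.2) hr.le⟩
  refine ⟨hγ_base u ▸ hS.add_smul_sub_mem ha.1 hb.1
    ⟨div_nonneg (by linarith) hD.le, (div_le_one hD).2 (by linarith)⟩, ?_⟩
  change 1 ≤ r / cosh u
  rw [le_div_iff₀ (cosh_pos u), one_mul]
  refine (cosh_le_max_of_mem_Icc hu).trans (max_le ?_ ?_)
  · exact (one_le_div (cosh_pos s)).1 (hsA ▸ ha.2)
  · exact (one_le_div (cosh_pos t)).1 (htB ▸ hb.2)

end ProductCusp

/-- **Product cusps are convex.**  In the upper half-space model, if `S` is a convex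
subset of the horosphere `{xₙ = 1}` (convex for the induced Euclidean metric), then
`Ω = {x : (x₁,…,x_{n−1},1) ∈ S and xₙ ≥ 1}` is a convex subset of hyperbolic space. -/
theorem product_cusp_convex {n : ℕ} (S : Set (EuclideanSpace ℝ (Fin n)))
    (hS : Convex ℝ S) :
    DConvex hdist {p : Hyp n | p.1.1 ∈ S ∧ 1 ≤ p.1.2} := by
  intro a ha b hb
  by_cases hx : a.1.1 = b.1.1
  · exact exists_vertical_isSeg_subset_productCusp ha hb hx
  · exact exists_semicircle_isSeg_subset_productCusp hS ha hb hx
end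
end
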